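/- If C ⊆ Rⁿ is a linear code invariant under the (1-2u²)-constacyclic shift ϱ, then its Gray image Φ(C) ⊆ F_p^{2n} is invariant under the cyclic shift, i.e., Φ(C) is a cyclic code of length 2n over F_p. -/

import Mathlib

/-!
Multiplication by `λ = 1 - 2u²` uses `u³ = u` to send `a + bu + cu²` to `a - bu - (2a + c)u²`.
The Gray image of a word is the concatenation of `-c` and `2a + c`, and a cyclic shift of a
concatenation shifts each half while feeding the last entry of one half into the other. So the
cyclic shift of `Φ(r)` is `Φ(ϱ r)`: the two new leading entries `2a + c` and `-c` are exactly
what `λ` produces. Hence `Φ` semiconjugates `ϱ` to the cyclic shift, and `ϱ(C) = C` gives the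
claim.
-/

open Polynomial

abbrev Rp (p : ℕ) := AdjoinRoot (X ^ 3 - X : (ZMod p)[X])
noncomputable def uu (p : ℕ) : Rp p := AdjoinRoot.root _
noncomputable def lam (p : ℕ) : Rp p := 1 - 2 * uu p ^ 2
noncomputable def am (p : ℕ) : ZMod p →+* Rp p := algebraMap (ZMod p) (Rp p)

noncomputable def rho (p n : ℕ) [NeZero n] (r : Fin n → Rp p) : Fin n → Rp p :=
  fun i => if i = 0 then lam p * r (i - 1) else r (i - 1)

def cshift {α : Type*} {n : ℕ} [NeZero n] (x : Fin n → α) : Fin n → α := fun i => x (i - 1)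

noncomputable def enc (p n : ℕ) (a b c : Fin n → ZMod p) : Fin n → Rp p :=
  fun i => am p (a i) + am p (b i) * uu p + am p (c i) * uu p ^ 2

def grayOut (p n : ℕ) (a c : Fin n → ZMod p) : Fin (2 * n) → ZMod p :=
  fun j =>
    if h : (j : ℕ) < n then - c ⟨j, h⟩
    else 2 * a ⟨(j : ℕ) - n, by have := j.isLt; omega⟩ +
      c ⟨(j : ℕ) - n, by have := j.isLt; omega⟩

theorem Fin.val_sub_one_eq_ite {m : ℕ} [NeZero m] (j : Fin m) :
    ((j - 1 : Fin m) : ℕ) = if j = 0 then m - 1 else (j : ℕ) - 1 := by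
  obtain ⟨k, rfl⟩ := Nat.exists_eq_succ_of_ne_zero (NeZero.ne m)
  simpa using Fin.coe_sub_one j

section Shifts

variable {α : Type*} {n : ℕ}

def shiftIn [NeZero n] (a : α) (x : Fin n → α) : Fin n → α :=
  fun i => if i = 0 then a else x (i - 1)

def concatHalves (x y : Fin n → α) : Fin (2 * n) → α :=
  fun j => if h : (j : ℕ) < n then x ⟨j, h⟩ else y ⟨j - n, by omega⟩

theorem cshift_concatHalves [NeZero n] (x y : Fin n → α) :
    cshift (concatHalves x y) = concatHalves (shiftIn (y (0 - 1)) x) (shiftIn (x (0 - 1)) y) := by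
  funext j
  simp only [cshift, concatHalves, shiftIn, Fin.ext_iff, Fin.val_sub_one_eq_ite, Fin.val_zero]
  split_ifs <;> split <;> (try split) <;> first | omega |
    (congr 1; ext; simp only [Fin.val_sub_one_eq_ite, Fin.ext_iff, Fin.val_zero]; split_ifs <;> omega)

end Shifts

theorem grayOut_eq_concatHalves (p n : ℕ) (a c : Fin n → ZMod p) :
    grayOut p n a c = concatHalves (-c) (2 * a + c) :=
  rfl

theorem cshift_grayOut (p n : ℕ) [NeZero n] (a c : Fin n → ZMod p) :
    cshift (grayOut p n a c) =
      grayOut p n (cshift a) (shiftIn (-(2 * a (0 - 1) + c (0 - 1))) c) := by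
  rw [grayOut_eq_concatHalves, grayOut_eq_concatHalves, cshift_concatHalves]
  congr 1 <;> funext i <;> by_cases hi : i = 0 <;>
    simp only [shiftIn, cshift, hi, if_true, if_false, Pi.add_apply, Pi.mul_apply, Pi.neg_apply,
      Pi.ofNat_apply] <;>
    ring

theorem uu_pow_three (p : ℕ) : uu p ^ 3 = uu p := by
  have h := AdjoinRoot.eval₂_root (X ^ 3 - X : (ZMod p)[X])
  simpa [uu, sub_eq_zero] using h

theorem lam_mul (p : ℕ) (a b c : ZMod p) :
    lam p * (am p a + am p b * uu p + am p c * uu p ^ 2) =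
      am p a + am p (-b) * uu p + am p (-(2 * a + c)) * uu p ^ 2 := by
  simp only [lam, map_neg, map_add, map_mul, map_ofNat]
  linear_combination (-(2 * am p b) - 2 * am p c * uu p) * uu_pow_three p

theorem rho_enc (p n : ℕ) [NeZero n] (a b c : Fin n → ZMod p) :
    rho p n (enc p n a b c) =
      enc p n (cshift a) (shiftIn (-b (0 - 1)) b) (shiftIn (-(2 * a (0 - 1) + c (0 - 1))) c) := by
  funext i
  by_cases hi : i = 0
  · subst hi
    simp only [rho, enc, shiftIn, cshift, if_true, lam_mul]
  · simp only [rho, enc, shiftIn, cshift, hi, if_false]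

theorem AdjoinRoot.exists_natDegree_lt_eq_aeval_root {R : Type*} [CommRing R] {g : R[X]}
    (hg : g.Monic) (hg1 : g ≠ 1) (x : AdjoinRoot g) :
    ∃ q : R[X], q.natDegree < g.natDegree ∧ x = aeval (root g) q := by
  obtain ⟨f, rfl⟩ := AdjoinRoot.mk_surjective x
  refine ⟨f %ₘ g, natDegree_modByMonic_lt f hg hg1, ?_⟩
  rw [AdjoinRoot.aeval_eq, ← AdjoinRoot.modByMonicHom_mk hg, AdjoinRoot.mk_leftInverse hg]

theorem exists_eq_am_add_am_mul_uu_add (p : ℕ) (x : Rp p) :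
    ∃ a b c : ZMod p, x = am p a + am p b * uu p + am p c * uu p ^ 2 := by
  cases subsingleton_or_nontrivial (ZMod p)
  · have := Module.subsingleton (ZMod p) (Rp p)
    exact ⟨0, 0, 0, Subsingleton.elim _ _⟩
  have hdeg : (X ^ 3 - X : (ZMod p)[X]).natDegree = 3 := by compute_degree!
  have hmonic : (X ^ 3 - X : (ZMod p)[X]).Monic := by monicity!
  have hne_one : (X ^ 3 - X : (ZMod p)[X]) ≠ 1 := fun h => by simp [h] at hdeg
  obtain ⟨q, hq, rfl⟩ := AdjoinRoot.exists_natDegree_lt_eq_aeval_root hmonic hne_one x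
  refine ⟨q.coeff 0, q.coeff 1, q.coeff 2, ?_⟩
  simp [aeval_eq_sum_range' (hdeg ▸ hq), Finset.sum_range_succ, Algebra.smul_def, am, uu]

theorem exists_enc_eq (p n : ℕ) (r : Fin n → Rp p) : ∃ a b c, r = enc p n a b c := by
  choose a b c h using fun i => exists_eq_am_add_am_mul_uu_add p (r i)
  exact ⟨a, b, c, funext h⟩

theorem gray_image_of_constacyclic_is_cyclic_general (p n : ℕ)
    [NeZero n] (C : Submodule (Rp p) (Fin n → Rp p))
    (hC : rho p n '' (C : Set (Fin n → Rp p)) = C)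
    (Φ : (Fin n → Rp p) → Fin (2 * n) → ZMod p)
    (hΦ : ∀ a b c : Fin n → ZMod p, Φ (enc p n a b c) = grayOut p n a c) :
    cshift '' (Φ '' (C : Set (Fin n → Rp p))) = Φ '' (C : Set (Fin n → Rp p)) := by
  have hsemiconj : Function.Semiconj Φ (rho p n) cshift := by
    intro r
    obtain ⟨a, b, c, rfl⟩ := exists_enc_eq p n r
    rw [rho_enc, hΦ, hΦ, cshift_grayOut]
  rw [← hsemiconj.set_image, hC]

theorem gray_image_of_constacyclic_is_cyclic (p n : ℕ) [Fact p.Prime] (hp : p ≠ 2)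
    [NeZero n] (C : Submodule (Rp p) (Fin n → Rp p))
    (hC : rho p n '' (C : Set (Fin n → Rp p)) = C)
    (Φ : (Fin n → Rp p) → Fin (2 * n) → ZMod p)
    (hΦ : ∀ a b c : Fin n → ZMod p, Φ (enc p n a b c) = grayOut p n a c) :
    cshift '' (Φ '' (C : Set (Fin n → Rp p))) = Φ '' (C : Set (Fin n → Rp p)) :=
  gray_image_of_constacyclic_is_cyclic_general p n C hC Φ hΦ
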